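/- Let N ≥ 1, let B be an N×N integer matrix, let u ∈ {1,…,N}, let B₋ be the single Cuntz splice of B at u, and let B₋₋ be the double Cuntz splice of B at u. If x ∈ ℤ^{N+4} satisfies (B₋ ⊕ (−I₂))ᵀ x = 0, then x_{N+1} = x_{N+3} = x_{N+4} = 0, x_u + x_{N+2} = 0, and moreover B₋₋ᵀ x = 0; in other words, the kernel of the transpose of B₋ ⊕ (−I₂) is contained in the kernel of the transpose of B₋₋. -/

import Mathlib

/-! The two matrices agree in every column indexed by `Fin N`, so at those coordinates the
equations of `B₋₋ᵀ x = 0` are those of `(B₋ ⊕ (-I₂))ᵀ x = 0`. At the four new coordinates the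
second system reads `x_u + x_{N+2} = x_{N+1} = -x_{N+3} = -x_{N+4} = 0`, which forces those
of the first, `x_u + x_{N+2} + x_{N+3} = x_{N+1} = x_{N+1} + x_{N+4} = x_{N+3} = 0`. -/

open Matrix

/-- The single Cuntz splice `B₋` of `B` at `u`, augmented by `-I₂`, i.e. the matrix
`B₋ ⊕ (-I₂)` where the indices `N+1, N+2` (the splice) are modelled as
`Sum.inr 0, Sum.inr 1` and the indices `N+3, N+4` (carrying `-I₂`) as
`Sum.inr 2, Sum.inr 3`. -/
def cuntzSpliceOnceExt {N : ℕ} (B : Matrix (Fin N) (Fin N) ℤ) (u : Fin N) :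
    Matrix (Fin N ⊕ Fin 4) (Fin N ⊕ Fin 4) ℤ :=
  fun i j => match i, j with
  | Sum.inl i, Sum.inl j => B i j
  | Sum.inl i, Sum.inr k => if i = u ∧ k = 0 then 1 else 0
  | Sum.inr k, Sum.inl j => if k = 0 ∧ j = u then 1 else 0
  | Sum.inr k, Sum.inr l => !![0, 1, 0, 0; 1, 0, 0, 0; 0, 0, -1, 0; 0, 0, 0, -1] k l

/-- The double Cuntz splice `B₋₋` of `B` at `u`, with the four new indices
`N+1, …, N+4` modelled as `Sum.inr 0, …, Sum.inr 3`. -/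
def cuntzSpliceTwice {N : ℕ} (B : Matrix (Fin N) (Fin N) ℤ) (u : Fin N) :
    Matrix (Fin N ⊕ Fin 4) (Fin N ⊕ Fin 4) ℤ :=
  fun i j => match i, j with
  | Sum.inl i, Sum.inl j => B i j
  | Sum.inl i, Sum.inr k => if i = u ∧ k = 0 then 1 else 0
  | Sum.inr k, Sum.inl j => if k = 0 ∧ j = u then 1 else 0
  | Sum.inr k, Sum.inr l => !![0, 1, 1, 0; 1, 0, 0, 0; 1, 0, 0, 1; 0, 0, 1, 0] k l

namespace CuntzSplice

variable {N : ℕ} (B : Matrix (Fin N) (Fin N) ℤ) (u : Fin N) (x : Fin N ⊕ Fin 4 → ℤ)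

theorem cuntzSpliceTwice_apply_inl (i : Fin N ⊕ Fin 4) (j : Fin N) :
    cuntzSpliceTwice B u i (Sum.inl j) = cuntzSpliceOnceExt B u i (Sum.inl j) := by
  rcases i with i | k <;> rfl

theorem transpose_cuntzSpliceTwice_mulVec_inl (j : Fin N) :
    ((cuntzSpliceTwice B u)ᵀ *ᵥ x) (Sum.inl j) =
      ((cuntzSpliceOnceExt B u)ᵀ *ᵥ x) (Sum.inl j) := by
  simp only [mulVec, dotProduct, transpose_apply, cuntzSpliceTwice_apply_inl]

theorem transpose_cuntzSpliceOnceExt_mulVec_inr :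
    (fun k => ((cuntzSpliceOnceExt B u)ᵀ *ᵥ x) (Sum.inr k)) =
      ![x (Sum.inl u) + x (Sum.inr 1), x (Sum.inr 0), -x (Sum.inr 2), -x (Sum.inr 3)] := by
  ext k
  fin_cases k <;>
    simp [mulVec, dotProduct, cuntzSpliceOnceExt, Fintype.sum_sum_type, Fin.sum_univ_four]

theorem transpose_cuntzSpliceTwice_mulVec_inr :
    (fun k => ((cuntzSpliceTwice B u)ᵀ *ᵥ x) (Sum.inr k)) =
      ![x (Sum.inl u) + x (Sum.inr 1) + x (Sum.inr 2), x (Sum.inr 0),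
        x (Sum.inr 0) + x (Sum.inr 3), x (Sum.inr 2)] := by
  ext k
  fin_cases k <;>
    simp [mulVec, dotProduct, cuntzSpliceTwice, Fintype.sum_sum_type, Fin.sum_univ_four,
      add_assoc]

end CuntzSplice

open CuntzSplice in
theorem ker_transpose_spliceOnceExt_subset_ker_transpose_spliceTwice_general
    (N : ℕ) (B : Matrix (Fin N) (Fin N) ℤ) (u : Fin N)
    (x : Fin N ⊕ Fin 4 → ℤ)
    (hx : (cuntzSpliceOnceExt B u).transpose.mulVec x = 0) :
    x (Sum.inr 0) = 0 ∧ x (Sum.inr 2) = 0 ∧ x (Sum.inr 3) = 0 ∧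
    x (Sum.inl u) + x (Sum.inr 1) = 0 ∧
    (cuntzSpliceTwice B u).transpose.mulVec x = 0 := by
  have hinr : ![x (Sum.inl u) + x (Sum.inr 1), x (Sum.inr 0), -x (Sum.inr 2), -x (Sum.inr 3)] =
      0 := by
    rw [← transpose_cuntzSpliceOnceExt_mulVec_inr, hx]
    rfl
  have hu : x (Sum.inl u) + x (Sum.inr 1) = 0 := congrFun hinr 0
  have h0 : x (Sum.inr 0) = 0 := congrFun hinr 1
  have h2 : x (Sum.inr 2) = 0 := neg_eq_zero.mp (congrFun hinr 2)
  have h3 : x (Sum.inr 3) = 0 := neg_eq_zero.mp (congrFun hinr 3)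
  refine ⟨h0, h2, h3, hu, ?_⟩
  ext (j | k)
  · rw [transpose_cuntzSpliceTwice_mulVec_inl, hx]
  · refine (congrFun (transpose_cuntzSpliceTwice_mulVec_inr B u x) k).trans ?_
    fin_cases k <;> simp [hu, h0, h2, h3]

/-- Any vector in the kernel of `(B₋ ⊕ (-I₂))ᵀ` vanishes at the coordinates
`N+1, N+3, N+4`, satisfies `x_u + x_{N+2} = 0`, and lies in the kernel of `B₋₋ᵀ`. -/
theorem ker_transpose_spliceOnceExt_subset_ker_transpose_spliceTwice
    (N : ℕ) (hN : 1 ≤ N) (B : Matrix (Fin N) (Fin N) ℤ) (u : Fin N)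
    (x : Fin N ⊕ Fin 4 → ℤ)
    (hx : (cuntzSpliceOnceExt B u).transpose.mulVec x = 0) :
    x (Sum.inr 0) = 0 ∧ x (Sum.inr 2) = 0 ∧ x (Sum.inr 3) = 0 ∧
    x (Sum.inl u) + x (Sum.inr 1) = 0 ∧
    (cuntzSpliceTwice B u).transpose.mulVec x = 0 :=
  ker_transpose_spliceOnceExt_subset_ker_transpose_spliceTwice_general N B u x hx
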